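/- arXiv:math/0401389 — 2 statements merged into one kernel-verified Lean document; each statement's English description precedes it below -/
import Mathlib

section
/- For every n ≥ 1, the limit lim_{s → 0+} β_n(s) exists, is finite, and equals ∫_0^1 (1/w)(1 − e^{−β_{n−1}(1−w)}) dw; writing β_n(0) for this value, the sequence (β_n(0))_{n ≥ 0} (with β₀(0) = 1) is non-increasing. -/
open MeasureTheory Real Set Filter

/-- The recursively defined sequence of functions `β_n`:
`β₀(s) = 1 - s` and `β_n(s) = ∫_s^1 (1/w)(1 - e^{-β_{n-1}(1-w)}) dw`. -/
noncomputable def beta : ℕ → ℝ → ℝ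
  | 0, s => 1 - s
  | n + 1, s => ∫ w in Set.Ioc s 1, (1 / w) * (1 - Real.exp (-(beta n (1 - w))))

/-!
By induction on `n`, each `β_n` is continuous on `[0, 1]` with `0 ≤ β_n(s) ≤ 1 - s`. The bound
makes the integrand `(1/w)(1 - e^{-β_n(1-w)})` lie in `[0, 1]` on `(0, 1]`, because
`1 - e^{-x} ≤ x`; so it is integrable, and `β_{n+1}(s)`, a tail integral of it, is again
continuous and at most `1 - s`. Continuity at `0` gives the limit. Since `x ↦ 1 - e^{-x}` is
monotone, `β_{n+1} ≤ β_n` propagates from `β_1 ≤ 1 - s = β_0` to all `n`.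
-/

theorem continuousOn_setIntegral_Ioc_left {E : Type*} [NormedAddCommGroup E] [NormedSpace ℝ E]
    {μ : Measure ℝ} [NullSingletonClass μ] {f : ℝ → E} {a b : ℝ}
    (hf : IntegrableOn f (Ioc a b) μ) :
    ContinuousOn (fun s => ∫ x in Ioc s b, f x ∂μ) (Icc a b) := by
  rcases le_or_gt a b with hab | hba
  · have hIcc : IntegrableOn f (uIcc a b) μ := by
      rwa [uIcc_of_le hab, integrableOn_Icc_iff_integrableOn_Ioc]
    refine (uIcc_of_le hab ▸ intervalIntegral.continuousOn_primitive_interval_left hIcc).congr ?_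
    intro s hs
    exact (intervalIntegral.integral_of_le hs.2).symm
  · simp [Icc_eq_empty_of_lt hba]

lemma one_sub_exp_neg_le (x : ℝ) : 1 - exp (-x) ≤ x := by
  linarith [one_sub_le_exp_neg x]

lemma one_sub_exp_neg_nonneg {x : ℝ} (hx : 0 ≤ x) : 0 ≤ 1 - exp (-x) := by
  linarith [exp_le_one_iff.2 (neg_nonpos.2 hx)]

noncomputable def betaIntegrand (n : ℕ) (w : ℝ) : ℝ :=
  1 / w * (1 - exp (-beta n (1 - w)))

lemma beta_succ (n : ℕ) (s : ℝ) : beta (n + 1) s = ∫ w in Ioc s 1, betaIntegrand n w := rfl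

lemma betaIntegrand_le_of_beta_le {m n : ℕ} {w : ℝ} (hw : 0 < w)
    (h : beta m (1 - w) ≤ beta n (1 - w)) : betaIntegrand m w ≤ betaIntegrand n w := by
  unfold betaIntegrand
  gcongr

lemma one_sub_mem_Icc_of_mem_Ioc {w : ℝ} (hw : w ∈ Ioc (0 : ℝ) 1) : 1 - w ∈ Icc (0 : ℝ) 1 :=
  ⟨sub_nonneg.2 hw.2, by linarith [hw.1]⟩

lemma continuousOn_betaIntegrand {n : ℕ} (hc : ContinuousOn (beta n) (Icc 0 1)) :
    ContinuousOn (betaIntegrand n) (Ioc 0 1) := by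
  refine (continuousOn_const.div continuousOn_id fun w hw => hw.1.ne').mul
    (continuousOn_const.sub (continuous_exp.comp_continuousOn ?_))
  exact (hc.comp (continuous_const.sub continuous_id).continuousOn
    fun _ => one_sub_mem_Icc_of_mem_Ioc).neg

section Induction

variable {n : ℕ} (hβ : ∀ s ∈ Icc (0 : ℝ) 1, beta n s ∈ Icc 0 (1 - s))
include hβ

lemma betaIntegrand_mem_Icc {w : ℝ} (hw : w ∈ Ioc (0 : ℝ) 1) : betaIntegrand n w ∈ Icc 0 1 := by
  have hβw : beta n (1 - w) ∈ Icc 0 w := by simpa using hβ _ (one_sub_mem_Icc_of_mem_Ioc hw)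
  have hw₀ : 0 < 1 / w := one_div_pos.2 hw.1
  refine ⟨mul_nonneg hw₀.le (one_sub_exp_neg_nonneg hβw.1), ?_⟩
  calc betaIntegrand n w ≤ 1 / w * w :=
        mul_le_mul_of_nonneg_left ((one_sub_exp_neg_le _).trans hβw.2) hw₀.le
    _ = 1 := one_div_mul_cancel hw.1.ne'

lemma integrableOn_betaIntegrand_of_mem_Icc (hc : ContinuousOn (beta n) (Icc 0 1)) :
    IntegrableOn (betaIntegrand n) (Ioc 0 1) := by
  refine .of_bound measure_Ioc_lt_top
    ((continuousOn_betaIntegrand hc).aestronglyMeasurable measurableSet_Ioc) 1 ?_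
  filter_upwards [ae_restrict_mem measurableSet_Ioc] with w hw
  obtain ⟨h₀, h₁⟩ := betaIntegrand_mem_Icc hβ hw
  rwa [norm_of_nonneg h₀]

lemma beta_succ_mem_Icc {s : ℝ} (hs : s ∈ Icc (0 : ℝ) 1)
    (hint : IntegrableOn (betaIntegrand n) (Ioc 0 1)) : beta (n + 1) s ∈ Icc 0 (1 - s) := by
  have hsub : Ioc s 1 ⊆ Ioc 0 1 := Ioc_subset_Ioc_left hs.1
  rw [beta_succ]
  constructor
  · exact setIntegral_nonneg measurableSet_Ioc fun w hw =>
      (betaIntegrand_mem_Icc hβ (hsub hw)).1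
  · calc ∫ w in Ioc s 1, betaIntegrand n w ≤ ∫ _ in Ioc s 1, (1 : ℝ) :=
          setIntegral_mono_on (hint.mono_set hsub) (integrableOn_const measure_Ioc_lt_top.ne)
            measurableSet_Ioc fun w hw => (betaIntegrand_mem_Icc hβ (hsub hw)).2
      _ = 1 - s := by simp [hs.2]

end Induction

theorem beta_mem_Icc_and_continuousOn (n : ℕ) :
    (∀ s ∈ Icc (0 : ℝ) 1, beta n s ∈ Icc 0 (1 - s)) ∧ ContinuousOn (beta n) (Icc 0 1) := by
  induction n with
  | zero =>
    refine ⟨fun s hs => ⟨sub_nonneg.2 hs.2, le_rfl⟩, ?_⟩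
    exact (continuous_const.sub continuous_id).continuousOn
  | succ n ih =>
    have hint := integrableOn_betaIntegrand_of_mem_Icc ih.1 ih.2
    exact ⟨fun s hs => beta_succ_mem_Icc ih.1 hs hint, continuousOn_setIntegral_Ioc_left hint⟩

lemma continuousOn_beta (n : ℕ) : ContinuousOn (beta n) (Icc 0 1) :=
  (beta_mem_Icc_and_continuousOn n).2

lemma integrableOn_betaIntegrand (n : ℕ) : IntegrableOn (betaIntegrand n) (Ioc 0 1) :=
  integrableOn_betaIntegrand_of_mem_Icc (beta_mem_Icc_and_continuousOn n).1 (continuousOn_beta n)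

theorem beta_succ_le (n : ℕ) : ∀ s ∈ Icc (0 : ℝ) 1, beta (n + 1) s ≤ beta n s := by
  induction n with
  | zero => exact fun s hs => ((beta_mem_Icc_and_continuousOn 1).1 s hs).2
  | succ n ih =>
    intro s hs
    have hsub : Ioc s 1 ⊆ Ioc 0 1 := Ioc_subset_Ioc_left hs.1
    refine setIntegral_mono_on ((integrableOn_betaIntegrand _).mono_set hsub)
      ((integrableOn_betaIntegrand _).mono_set hsub) measurableSet_Ioc fun w hw => ?_
    exact betaIntegrand_le_of_beta_le (hsub hw).1 (ih _ (one_sub_mem_Icc_of_mem_Ioc (hsub hw)))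

/-- For every `n ≥ 1`, `lim_{s→0+} β_n(s)` exists, is finite, and
equals `∫_0^1 (1/w)(1 − e^{−β_{n−1}(1−w)}) dw =: β_n(0)`; moreover, with
`β₀(0) = 1`, the sequence `(β_n(0))_{n ≥ 0}` is non-increasing. -/
theorem stmt8 :
    (∀ n : ℕ, 1 ≤ n →
      Filter.Tendsto (fun s => beta n s) (nhdsWithin 0 (Set.Ioi 0))
        (nhds (∫ w in Set.Ioc (0:ℝ) 1,
          (1 / w) * (1 - Real.exp (-(beta (n - 1) (1 - w))))))) ∧
    (∀ n : ℕ, 1 ≤ n →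
      beta n 0 = ∫ w in Set.Ioc (0:ℝ) 1,
        (1 / w) * (1 - Real.exp (-(beta (n - 1) (1 - w))))) ∧
    beta 0 0 = 1 ∧
    Antitone (fun n : ℕ => beta n 0) := by
  have hzero : (0 : ℝ) ∈ Icc 0 1 := ⟨le_rfl, zero_le_one⟩
  have hval : ∀ n : ℕ, 1 ≤ n → beta n 0 = ∫ w in Set.Ioc (0:ℝ) 1,
      (1 / w) * (1 - Real.exp (-(beta (n - 1) (1 - w)))) := by
    rintro (_ | n) hn
    · omega
    · rfl
  refine ⟨fun n hn => ?_, hval, by simp [beta],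
    antitone_nat_of_succ_le fun n => beta_succ_le n 0 hzero⟩
  rw [← hval n hn, ← nhdsWithin_Ioc_eq_nhdsGT one_pos]
  exact (continuousOn_beta n 0 hzero).mono_left (nhdsWithin_mono _ Ioc_subset_Icc_self)
end

section
/- The only function g ∈ 𝔉 satisfying the fixed-point equation g(x) = H̄(x)² · exp(∫_{−x}^{∞} g(s) ds) for all x ∈ ℝ is g = H̄. -/
/-!
Write `r(x) = ∫_{-x}^∞ (H̄ - g)`. Since `∫_{-x}^∞ H̄ = log (1 + eˣ)`, the fixed-point equation
says exactly `g = H̄ e^{-r}`, and `H̄² ≤ g ≤ H̄` gives `0 ≤ r ≤ ∫_{-x}^∞ H H̄ = H(x)`. Hence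
`H̄ - g = H̄ (1 - e^{-r}) ≤ H̄ (r - r²/4)`. With `c = sup r/H`, the linear term integrates to at
most `c H(x)`, while, `r` being nondecreasing, the quadratic term integrates to at least
`r(a)² H(-a) H(x)` for every `a`. Dividing by `H(x)` and taking the supremum gives
`c ≤ c - r(a)² H(-a)/4`, so `r ≡ 0` and `g = H̄`.
-/

open MeasureTheory Real Set Filter

/-- The Logistic distribution function `H(x) = 1/(1+e^{-x})`. -/
noncomputable def H (x : ℝ) : ℝ := 1 / (1 + Real.exp (-x))

/-- The tail `H̄ := 1 - H` of the Logistic distribution function. -/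
noncomputable def Hbar (x : ℝ) : ℝ := 1 - H x

/-- The set 𝔉 of continuous, non-increasing functions `f : ℝ → [0,1]`
with `H̄(x)² ≤ f(x) ≤ H̄(x)` for all `x`. -/
def memF (f : ℝ → ℝ) : Prop :=
  (∀ x, f x ∈ Set.Icc (0:ℝ) 1) ∧ Continuous f ∧ Antitone f ∧
    ∀ x, Hbar x ^ 2 ≤ f x ∧ f x ≤ Hbar x

/-- The operator `T(f)(x) := H̄(x)² · exp(∫_{-x}^∞ f(s) ds)`. -/
noncomputable def T (f : ℝ → ℝ) (x : ℝ) : ℝ :=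
  Hbar x ^ 2 * Real.exp (∫ s in Set.Ioi (-x), f s)

open Topology

lemma one_sub_exp_neg_le_s15 {t : ℝ} (h0 : 0 ≤ t) (h1 : t ≤ 1) :
    1 - exp (-t) ≤ t - t ^ 2 / 4 := by
  have h := abs_le.1 (Real.exp_bound (x := -t) (by rwa [abs_neg, abs_of_nonneg h0]) (n := 3)
    (by norm_num))
  simp only [Finset.sum_range_succ, Finset.sum_range_zero, abs_neg, abs_of_nonneg h0] at h
  norm_num [Nat.factorial] at h
  nlinarith [pow_le_pow_of_le_one h0 h1 (show 2 ≤ 3 by norm_num)]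

lemma Hbar_eq (x : ℝ) : Hbar x = 1 / (1 + exp x) := by
  have := exp_pos x
  rw [Hbar, H, exp_neg]
  field_simp
  ring

lemma Hbar_eq_exp_neg_div (x : ℝ) : Hbar x = exp (-x) / (1 + exp (-x)) := by
  rw [Hbar, H]
  field_simp
  ring

lemma Hbar_neg (x : ℝ) : Hbar (-x) = H x := by
  rw [Hbar_eq, H]

lemma H_pos (x : ℝ) : 0 < H x := by
  rw [H]; positivity

lemma Hbar_pos (x : ℝ) : 0 < Hbar x := by
  rw [Hbar_eq]; positivity

lemma H_le_one (x : ℝ) : H x ≤ 1 := by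
  linarith [Hbar_pos x, show Hbar x = 1 - H x from rfl]

lemma H_le_log_one_add_exp (x : ℝ) : H x ≤ log (1 + exp x) := by
  calc H x = 1 - (1 + exp x)⁻¹ := by rw [← one_div, ← Hbar_eq, Hbar]; ring
    _ ≤ log (1 + exp x) := one_sub_inv_le_log_of_pos (by positivity)

lemma continuous_Hbar : Continuous Hbar := by
  have : Hbar = fun x => 1 / (1 + exp x) := funext Hbar_eq
  rw [this]
  fun_prop (disch := intro x; positivity)

lemma hasDerivAt_H (x : ℝ) : HasDerivAt H (H x * Hbar x) x := by
  have h := (((hasDerivAt_neg x).exp).const_add 1).inv (by positivity : 1 + exp (-x) ≠ 0)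
  have hH : (fun y => 1 + exp (-y))⁻¹ = H := by funext y; simp [H]
  rw [hH] at h
  exact h.congr_deriv (by rw [Hbar_eq_exp_neg_div, H]; field_simp)

lemma hasDerivAt_neg_log_one_add_exp_neg (x : ℝ) :
    HasDerivAt (fun y => -log (1 + exp (-y))) (Hbar x) x := by
  have h := ((((hasDerivAt_neg x).exp).const_add 1).log (by positivity)).neg
  exact h.congr_deriv (by rw [Hbar_eq_exp_neg_div]; ring)

lemma tendsto_H_atTop : Tendsto H atTop (𝓝 1) := by
  have h := ((tendsto_exp_atBot.comp tendsto_neg_atTop_atBot).const_add 1).inv₀ (by norm_num)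
  show Tendsto (fun x => 1 / (1 + exp (-x))) atTop (𝓝 1)
  simpa [one_div, Function.comp_def] using h

lemma tendsto_neg_log_one_add_exp_neg_atTop :
    Tendsto (fun y => -log (1 + exp (-y))) atTop (𝓝 0) := by
  have h := (((tendsto_exp_atBot.comp tendsto_neg_atTop_atBot).const_add 1).log
    (by norm_num)).neg
  simpa [Function.comp_def] using h

lemma H_mul_Hbar_nonneg (x : ℝ) : 0 ≤ H x * Hbar x :=
  (mul_pos (H_pos x) (Hbar_pos x)).le

lemma integrableOn_Ioi_H_mul_Hbar (y : ℝ) : IntegrableOn (fun s => H s * Hbar s) (Ioi y) :=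
  integrableOn_Ioi_deriv_of_nonneg' (fun x _ => hasDerivAt_H x)
    (fun x _ => H_mul_Hbar_nonneg x) tendsto_H_atTop

lemma integral_Ioi_H_mul_Hbar (y : ℝ) : ∫ s in Ioi y, H s * Hbar s = Hbar y :=
  integral_Ioi_of_hasDerivAt_of_nonneg' (fun x _ => hasDerivAt_H x)
    (fun x _ => H_mul_Hbar_nonneg x) tendsto_H_atTop

lemma integrableOn_Ioi_Hbar (y : ℝ) : IntegrableOn Hbar (Ioi y) :=
  integrableOn_Ioi_deriv_of_nonneg' (fun x _ => hasDerivAt_neg_log_one_add_exp_neg x)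
    (fun x _ => (Hbar_pos x).le) tendsto_neg_log_one_add_exp_neg_atTop

lemma integral_Ioi_Hbar (y : ℝ) : ∫ s in Ioi y, Hbar s = log (1 + exp (-y)) := by
  rw [integral_Ioi_of_hasDerivAt_of_nonneg' (fun x _ => hasDerivAt_neg_log_one_add_exp_neg x)
    (fun x _ => (Hbar_pos x).le) tendsto_neg_log_one_add_exp_neg_atTop]
  ring

lemma integrableOn_Ioi_Hbar_mul {f : ℝ → ℝ} (hf : Measurable f) (hf0 : ∀ x, 0 ≤ f x)
    (hfH : ∀ s, f s ≤ H s) (y : ℝ) : IntegrableOn (fun s => Hbar s * f s) (Ioi y) := by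
  refine (integrableOn_Ioi_H_mul_Hbar y).mono'
    (continuous_Hbar.measurable.mul hf).aestronglyMeasurable (ae_of_all _ fun s => ?_)
  rw [Real.norm_of_nonneg (mul_nonneg (Hbar_pos s).le (hf0 s)), mul_comm (H s)]
  exact mul_le_mul_of_nonneg_left (hfH s) (Hbar_pos s).le

lemma integral_Ioi_Hbar_mul_le {f : ℝ → ℝ} {c : ℝ}
    (hint : ∀ y, IntegrableOn (fun s => Hbar s * f s) (Ioi y)) (hf : ∀ s, f s ≤ c * H s)
    (x : ℝ) : ∫ s in Ioi (-x), Hbar s * f s ≤ c * H x :=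
  calc ∫ s in Ioi (-x), Hbar s * f s ≤ ∫ s in Ioi (-x), c * (H s * Hbar s) :=
        integral_mono (hint _) ((integrableOn_Ioi_H_mul_Hbar _).const_mul c) fun s => by
          nlinarith [hf s, Hbar_pos s]
    _ = c * H x := by rw [integral_const_mul, integral_Ioi_H_mul_Hbar, Hbar_neg]

lemma H_mul_H_le_H_neg_max (a x : ℝ) : H (-a) * H x ≤ H (-max (-x) a) := by
  rcases le_total (-x) a with h | h
  · rw [max_eq_right h]
    exact mul_le_of_le_one_right (H_pos _).le (H_le_one x)
  · rw [max_eq_left h, neg_neg]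
    exact mul_le_of_le_one_left (H_pos _).le (H_le_one _)

lemma mul_H_mul_H_le_integral_Ioi_Hbar_mul {f : ℝ → ℝ} (hf : Monotone f) (hf0 : ∀ x, 0 ≤ f x)
    (hint : ∀ y, IntegrableOn (fun s => Hbar s * f s) (Ioi y)) (a x : ℝ) :
    f a * (H (-a) * H x) ≤ ∫ s in Ioi (-x), Hbar s * f s := by
  set b := max (-x) a
  calc f a * (H (-a) * H x) ≤ f a * log (1 + exp (-b)) :=
        mul_le_mul_of_nonneg_left ((H_mul_H_le_H_neg_max a x).trans
          (H_le_log_one_add_exp _)) (hf0 a)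
    _ = ∫ s in Ioi b, f a * Hbar s := by rw [integral_const_mul, integral_Ioi_Hbar]
    _ ≤ ∫ s in Ioi b, Hbar s * f s := by
        refine setIntegral_mono_on ((integrableOn_Ioi_Hbar b).const_mul _) (hint b)
          measurableSet_Ioi fun s hs => ?_
        rw [mul_comm]
        exact mul_le_mul_of_nonneg_left (hf ((le_max_right _ _).trans hs.le)) (Hbar_pos s).le
    _ ≤ ∫ s in Ioi (-x), Hbar s * f s :=
        setIntegral_mono_set (hint _)
          (ae_of_all _ fun s => mul_nonneg (Hbar_pos s).le (hf0 s))
          (Ioi_subset_Ioi (le_max_left _ _)).eventuallyLE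

theorem eq_zero_of_le_integral_Ioi {r : ℝ → ℝ} {κ : ℝ} (hκ : 0 < κ) (hr0 : ∀ x, 0 ≤ r x)
    (hrH : ∀ x, r x ≤ H x) (hmono : Monotone r)
    (hr : ∀ x, r x ≤ ∫ s in Ioi (-x), Hbar s * (r s - κ * r s ^ 2)) : r = 0 := by
  have hr2H : ∀ x, r x ^ 2 ≤ H x := fun x =>
    (pow_le_of_le_one (hr0 x) ((hrH x).trans (H_le_one x)) two_ne_zero).trans (hrH x)
  have hint := integrableOn_Ioi_Hbar_mul hmono.measurable hr0 hrH
  have hint2 := integrableOn_Ioi_Hbar_mul (hmono.measurable.pow_const 2)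
    (fun x => sq_nonneg (r x)) hr2H
  have hbdd : BddAbove (range fun x => r x / H x) :=
    ⟨1, forall_mem_range.2 fun x => div_le_one_of_le₀ (hrH x) (H_pos x).le⟩
  set c := ⨆ x, r x / H x
  have hc : ∀ x, r x ≤ c * H x := fun x =>
    (div_le_iff₀ (H_pos x)).1 (le_ciSup hbdd x)
  have key : ∀ a x, r x ≤ (c - κ * (r a ^ 2 * H (-a))) * H x := fun a x =>
    calc r x ≤ ∫ s in Ioi (-x), Hbar s * (r s - κ * r s ^ 2) := hr x
      _ = ∫ s in Ioi (-x), (Hbar s * r s - κ * (Hbar s * r s ^ 2)) :=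
        integral_congr_ae (ae_of_all _ fun s => by ring)
      _ = (∫ s in Ioi (-x), Hbar s * r s) - κ * ∫ s in Ioi (-x), Hbar s * r s ^ 2 := by
        rw [integral_sub (hint _) ((hint2 _).const_mul κ), integral_const_mul]
      _ ≤ c * H x - κ * (r a ^ 2 * (H (-a) * H x)) := by
        gcongr ?_ - κ * ?_
        · exact integral_Ioi_Hbar_mul_le hint hc x
        · exact mul_H_mul_H_le_integral_Ioi_Hbar_mul
            (fun u v huv => pow_le_pow_left₀ (hr0 u) (hmono huv) 2) (fun u => sq_nonneg (r u))
            hint2 a x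
      _ = (c - κ * (r a ^ 2 * H (-a))) * H x := by ring
  funext a
  have hle : c ≤ c - κ * (r a ^ 2 * H (-a)) :=
    ciSup_le fun x => (div_le_iff₀ (H_pos x)).2 (key a x)
  have : r a ^ 2 ≤ 0 := by nlinarith [mul_pos hκ (H_pos (-a))]
  exact pow_eq_zero_iff (n := 2) (by norm_num) |>.1 (le_antisymm this (sq_nonneg _))

noncomputable def tailDefect (g : ℝ → ℝ) (x : ℝ) : ℝ :=
  ∫ s in Ioi (-x), (Hbar s - g s)

section TailDefect

variable {g : ℝ → ℝ}

lemma integrableOn_Ioi_of_le_Hbar (hgm : Measurable g) (hg0 : ∀ x, 0 ≤ g x)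
    (hhi : ∀ x, g x ≤ Hbar x) (y : ℝ) : IntegrableOn g (Ioi y) :=
  (integrableOn_Ioi_Hbar y).mono' hgm.aestronglyMeasurable
    (ae_of_all _ fun s => by rw [Real.norm_of_nonneg (hg0 s)]; exact hhi s)

lemma tailDefect_eq (hint : ∀ y, IntegrableOn g (Ioi y)) (x : ℝ) :
    tailDefect g x = log (1 + exp x) - ∫ s in Ioi (-x), g s := by
  rw [tailDefect, integral_sub (integrableOn_Ioi_Hbar _) (hint _), integral_Ioi_Hbar, neg_neg]

lemma eq_Hbar_mul_exp_neg_tailDefect (hint : ∀ y, IntegrableOn g (Ioi y))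
    (hfix : ∀ x, g x = Hbar x ^ 2 * exp (∫ s in Ioi (-x), g s)) (x : ℝ) :
    g x = Hbar x * exp (-tailDefect g x) := by
  rw [hfix x, tailDefect_eq hint, neg_sub, exp_sub, exp_log (by positivity), Hbar_eq]
  field_simp

lemma tailDefect_nonneg (hhi : ∀ x, g x ≤ Hbar x) (x : ℝ) : 0 ≤ tailDefect g x :=
  setIntegral_nonneg measurableSet_Ioi fun s _ => sub_nonneg.2 (hhi s)

lemma monotone_tailDefect (hint : ∀ y, IntegrableOn g (Ioi y)) (hhi : ∀ x, g x ≤ Hbar x) :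
    Monotone (tailDefect g) := fun _ _ hab =>
  setIntegral_mono_set ((integrableOn_Ioi_Hbar _).sub (hint _))
    (ae_of_all _ fun s => sub_nonneg.2 (hhi s))
    (Ioi_subset_Ioi (neg_le_neg hab)).eventuallyLE

lemma tailDefect_le_H (hint : ∀ y, IntegrableOn g (Ioi y)) (hlo : ∀ x, Hbar x ^ 2 ≤ g x)
    (x : ℝ) : tailDefect g x ≤ H x :=
  calc tailDefect g x ≤ ∫ s in Ioi (-x), H s * Hbar s :=
        integral_mono ((integrableOn_Ioi_Hbar _).sub (hint _)) (integrableOn_Ioi_H_mul_Hbar _)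
          fun s => by rw [show H s = 1 - Hbar s by rw [Hbar]; ring]; nlinarith [hlo s]
    _ = H x := by rw [integral_Ioi_H_mul_Hbar, Hbar_neg]

lemma tailDefect_le_integral (hint : ∀ y, IntegrableOn g (Ioi y))
    (hlo : ∀ x, Hbar x ^ 2 ≤ g x) (hhi : ∀ x, g x ≤ Hbar x)
    (hfix : ∀ x, g x = Hbar x ^ 2 * exp (∫ s in Ioi (-x), g s)) (x : ℝ) :
    tailDefect g x ≤
      ∫ s in Ioi (-x), Hbar s * (tailDefect g s - 1 / 4 * tailDefect g s ^ 2) := by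
  have hr0 := tailDefect_nonneg hhi
  have hrH := tailDefect_le_H hint hlo
  have hr1 : ∀ s, tailDefect g s ≤ 1 := fun s => (hrH s).trans (H_le_one s)
  have hr2 : ∀ s, tailDefect g s ^ 2 ≤ tailDefect g s := fun s =>
    pow_le_of_le_one (hr0 s) (hr1 s) two_ne_zero
  have hr_meas := (monotone_tailDefect hint hhi).measurable
  refine integral_mono ((integrableOn_Ioi_Hbar _).sub (hint _))
    (integrableOn_Ioi_Hbar_mul (f := fun s => tailDefect g s - 1 / 4 * tailDefect g s ^ 2)
      (by fun_prop) (fun s => by nlinarith [hr2 s]) (fun s => by nlinarith [hr0 s, hrH s]) _)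
    fun s => ?_
  rw [eq_Hbar_mul_exp_neg_tailDefect hint hfix s, ← mul_one_sub]
  exact mul_le_mul_of_nonneg_left (by linarith [one_sub_exp_neg_le_s15 (hr0 s) (hr1 s)])
    (Hbar_pos s).le

end TailDefect

/-- The only function `g ∈ 𝔉` with
`g(x) = H̄(x)² · exp(∫_{−x}^{∞} g(s) ds)` for all `x` is `g = H̄`. -/
theorem stmt15 (g : ℝ → ℝ) (hg : memF g)
    (hfix : ∀ x, g x = Hbar x ^ 2 * Real.exp (∫ s in Set.Ioi (-x), g s)) :
    g = Hbar := by
  obtain ⟨-, hgc, -, hbounds⟩ := hg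
  have hlo x := (hbounds x).1
  have hhi x := (hbounds x).2
  have hint :=
    integrableOn_Ioi_of_le_Hbar hgc.measurable (fun x => (sq_nonneg _).trans (hlo x)) hhi
  have hdefect : tailDefect g = 0 :=
    eq_zero_of_le_integral_Ioi (by norm_num : (0 : ℝ) < 1 / 4) (tailDefect_nonneg hhi)
      (tailDefect_le_H hint hlo) (monotone_tailDefect hint hhi)
      (tailDefect_le_integral hint hlo hhi hfix)
  funext x
  rw [eq_Hbar_mul_exp_neg_tailDefect hint hfix x, hdefect, Pi.zero_apply, neg_zero, exp_zero,
    mul_one]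
end
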